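/- Let K be a real symmetric positive definite matrix indexed by a finite set I, let x ∈ I, and let S ⊆ T ⊆ I \ {x}. For a subset A ⊆ I \ {x}, let K[A] denote the principal submatrix of K indexed by A and k_A := (K(x,j))_{j∈A} the column vector of cross-covariances. Then the conditional variance (mean squared prediction error) is monotone nonincreasing in the conditioning set: K(x,x) − k_T^⊤ K[T]^{−1} k_T ≤ K(x,x) − k_S^⊤ K[S]^{−1} k_S. -/

import Mathlib

open Matrix

/-- The principal submatrix of `K` with rows and columns indexed by the finite set `S`. -/
def principalSubmatrix {I : Type*} (K : Matrix I I ℝ) (S : Finset I) :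
    Matrix {a // a ∈ S} {a // a ∈ S} ℝ :=
  K.submatrix (fun a => a.1) (fun a => a.1)

/-- The cross-covariance vector `k_S = (K(x,j))_{j ∈ S}`. -/
def crossCov {I : Type*} (K : Matrix I I ℝ) (x : I) (S : Finset I) :
    {a // a ∈ S} → ℝ :=
  fun j => K x j.1

/-!
Conditioning on `S ⊆ T` amounts to compressing the quadratic optimisation problem
`k_T ⬝ K[T]⁻¹ k_T = max_u (2 k_T ⬝ u - u ⬝ K[T] u)` to vectors `u` supported on `S`, and a maximum
over a smaller set is smaller. Algebraically, the compression is `K[S] = Pᵀ K[T] P` and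
`k_S = Pᵀ k_T` for the coordinate embedding `P`.
-/

namespace Matrix

variable {m n R : Type*} [Fintype n]

lemma IsSymm.dotProduct_mulVec_comm [CommSemiring R] {A : Matrix n n R} (hA : A.IsSymm)
    (u v : n → R) : u ⬝ᵥ (A *ᵥ v) = v ⬝ᵥ (A *ᵥ u) := by
  rw [dotProduct_mulVec, ← mulVec_transpose, hA.eq, dotProduct_comm]

variable [DecidableEq n]

lemma mulVec_nonsing_inv_mulVec [CommRing R] {A : Matrix n n R} (hA : IsUnit A.det)
    (b : n → R) : A *ᵥ (A⁻¹ *ᵥ b) = b := by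
  rw [mulVec_mulVec, mul_nonsing_inv _ hA, one_mulVec]

lemma one_submatrix_transpose_mul_mul [Semiring R] (B : Matrix n n R) (e : m → n) :
    ((1 : Matrix n n R).submatrix id e)ᵀ * B * (1 : Matrix n n R).submatrix id e =
      B.submatrix e e := by
  rw [transpose_submatrix, transpose_one, ← Equiv.coe_refl, one_submatrix_mul, mul_submatrix_one]
  simp

lemma one_submatrix_transpose_mulVec [Semiring R] (e : m → n) (b : n → R) :
    ((1 : Matrix n n R).submatrix id e)ᵀ *ᵥ b = b ∘ e := by
  rw [transpose_submatrix, transpose_one, ← Equiv.coe_refl, submatrix_mulVec_equiv]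
  simp

/-- Half of the variational formula `b ⬝ B⁻¹ b = max_u (2 b ⬝ u - u ⬝ B u)`; the maximum is
attained at `u = B⁻¹ b`, and the gap is the `B`-norm of `u - B⁻¹ b`. -/
theorem PosDef.two_mul_dotProduct_sub_le {B : Matrix n n ℝ} (hB : B.PosDef) (b u : n → ℝ) :
    2 * (b ⬝ᵥ u) - u ⬝ᵥ (B *ᵥ u) ≤ b ⬝ᵥ (B⁻¹ *ᵥ b) := by
  set v := B⁻¹ *ᵥ b
  have hBv : B *ᵥ v = b := mulVec_nonsing_inv_mulVec hB.det_pos.ne'.isUnit b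
  have hsymm : B.IsSymm := isHermitian_iff_isSymm.mp hB.isHermitian
  have hgap_nonneg : 0 ≤ (u - v) ⬝ᵥ (B *ᵥ (u - v)) := by
    simpa using hB.posSemidef.dotProduct_mulVec_nonneg (u - v)
  have hgap : (u - v) ⬝ᵥ (B *ᵥ (u - v)) = u ⬝ᵥ (B *ᵥ u) - 2 * (b ⬝ᵥ u) + b ⬝ᵥ v := by
    rw [mulVec_sub, dotProduct_sub, sub_dotProduct, sub_dotProduct,
      hsymm.dotProduct_mulVec_comm v u, hBv, dotProduct_comm u b, dotProduct_comm v b]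
    ring
  linarith

theorem PosDef.dotProduct_transpose_mul_mul_inv_mulVec_le [Fintype m] [DecidableEq m]
    {B : Matrix n n ℝ} (hB : B.PosDef) (P : Matrix n m ℝ) (hP : IsUnit (Pᵀ * B * P).det)
    (b : n → ℝ) : (Pᵀ *ᵥ b) ⬝ᵥ ((Pᵀ * B * P)⁻¹ *ᵥ (Pᵀ *ᵥ b)) ≤ b ⬝ᵥ (B⁻¹ *ᵥ b) := by
  set C := Pᵀ * B * P
  set w := C⁻¹ *ᵥ (Pᵀ *ᵥ b)
  have hCw : C *ᵥ w = Pᵀ *ᵥ b := mulVec_nonsing_inv_mulVec hP _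
  have hlin : (Pᵀ *ᵥ b) ⬝ᵥ w = b ⬝ᵥ (P *ᵥ w) := by
    rw [mulVec_transpose, dotProduct_mulVec b P w]
  have hquad : w ⬝ᵥ (C *ᵥ w) = (P *ᵥ w) ⬝ᵥ (B *ᵥ (P *ᵥ w)) := by
    rw [dotProduct_comm, ← mulVec_mulVec, ← mulVec_mulVec, mulVec_transpose, ← dotProduct_mulVec,
      dotProduct_comm]
  calc (Pᵀ *ᵥ b) ⬝ᵥ w = 2 * ((Pᵀ *ᵥ b) ⬝ᵥ w) - w ⬝ᵥ (C *ᵥ w) := by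
        rw [hCw, dotProduct_comm w]; ring
    _ = 2 * (b ⬝ᵥ (P *ᵥ w)) - (P *ᵥ w) ⬝ᵥ (B *ᵥ (P *ᵥ w)) := by rw [hlin, hquad]
    _ ≤ b ⬝ᵥ (B⁻¹ *ᵥ b) := hB.two_mul_dotProduct_sub_le b (P *ᵥ w)

theorem PosDef.dotProduct_submatrix_inv_mulVec_le [Fintype m] [DecidableEq m]
    {B : Matrix n n ℝ} (hB : B.PosDef) {e : m → n} (he : Function.Injective e) (b : n → ℝ) :
    (b ∘ e) ⬝ᵥ ((B.submatrix e e)⁻¹ *ᵥ (b ∘ e)) ≤ b ⬝ᵥ (B⁻¹ *ᵥ b) := by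
  have hP := hB.dotProduct_transpose_mul_mul_inv_mulVec_le ((1 : Matrix n n ℝ).submatrix id e)
    (by rw [one_submatrix_transpose_mul_mul]; exact (hB.submatrix he).det_pos.ne'.isUnit) b
  rwa [one_submatrix_transpose_mul_mul, one_submatrix_transpose_mulVec] at hP

end Matrix

theorem mspe_monotone_general {I : Type*} [Fintype I] [DecidableEq I]
    (K : Matrix I I ℝ) (hK : K.PosDef) (x : I) (S T : Finset I)
    (hST : S ⊆ T) :
    K x x - crossCov K x T ⬝ᵥ ((principalSubmatrix K T)⁻¹ *ᵥ crossCov K x T)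
      ≤ K x x - crossCov K x S ⬝ᵥ ((principalSubmatrix K S)⁻¹ *ᵥ crossCov K x S) := by
  have hKT : (principalSubmatrix K T).PosDef := hK.submatrix Subtype.val_injective
  have hinj : Function.Injective fun a : {a // a ∈ S} => (⟨a.1, hST a.2⟩ : {a // a ∈ T}) :=
    fun a b h => Subtype.ext (by simpa using congrArg Subtype.val h)
  -- `K[S]` and `k_S` are, definitionally, `K[T]` and `k_T` restricted along `S ↪ T`.
  exact sub_le_sub_left (hKT.dotProduct_submatrix_inv_mulVec_le hinj (crossCov K x T)) _

/-- **Monotonicity of the conditional variance (MSPE).** Let `K` be a real symmetric positive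
definite matrix indexed by a finite set `I`, let `x ∈ I`, and let `S ⊆ T ⊆ I \ {x}`. Then
`K(x,x) − k_T^⊤ K[T]⁻¹ k_T ≤ K(x,x) − k_S^⊤ K[S]⁻¹ k_S`. -/
theorem mspe_monotone {I : Type*} [Fintype I] [DecidableEq I]
    (K : Matrix I I ℝ) (hK : K.PosDef) (x : I) (S T : Finset I)
    (hST : S ⊆ T) (hxT : x ∉ T) :
    K x x - crossCov K x T ⬝ᵥ ((principalSubmatrix K T)⁻¹ *ᵥ crossCov K x T)
      ≤ K x x - crossCov K x S ⬝ᵥ ((principalSubmatrix K S)⁻¹ *ᵥ crossCov K x S) :=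
  mspe_monotone_general K hK x S T hST
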